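/- There exists a constant l > 0, depending only on β, θ and μ (namely any l with (G∘F₁⁻¹)' < -l on (0, F₁(1))), such that for all y₀¹, y₀² ∈ (0, F₁(1)) and all t ∈ ℝ₊, |y_t(y₀¹) - y_t(y₀²)| ≤ |y₀¹ - y₀²| · e^{-lt}. -/

import Mathlib

/- Fix α ∈ (0,1], β ∈ (1-α,1), θ > 0, μ ∈ (0,1), γ ∈ ℝ.
F₁(y) = ∫₀^y [v(1-v)]^{-β} dv is a strictly increasing bijection from [0,1]
onto [0,F₁(1)] with inverse F₁⁻¹ (realized via `Function.invFunOn`), and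
G(y) := θ(μ-y)[y(1-y)]^{-β}.
STATEMENT 14: There exists l > 0, depending only on β, θ, μ (in particular not
on the driving signal w nor on the initial conditions), such that for every
α-Hölder w with w₀ = 0, all y₀¹, y₀² ∈ (0,F₁(1)) and the corresponding
continuous (0,F₁(1))-valued solutions of
y_t = y₀ⁱ + ∫₀^t (G∘F₁⁻¹)(y_s) ds + γθ^β w_t, one has
|y_t(y₀¹) - y_t(y₀²)| ≤ |y₀¹ - y₀²| e^{-lt} for all t ∈ ℝ₊. -/

noncomputable def F1 (β y : ℝ) : ℝ := ∫ v in (0:ℝ)..y, (v * (1 - v)) ^ (-β)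

noncomputable def F1inv (β z : ℝ) : ℝ := Function.invFunOn (F1 β) (Set.Icc 0 1) z

noncomputable def G (β θ μ x : ℝ) : ℝ := θ * (μ - x) * (x * (1 - x)) ^ (-β)

/-!
Write `g := G ∘ F₁⁻¹` for the drift and `l := 4θβμ(1-μ)`. With `x = F₁⁻¹ y` and `p = x(1-x)`,
`g'(y) = G'(x) / F₁'(x) = -θ (p + β(μ-x)(1-2x)) / p ≤ -l`, i.e. `x ↦ G x + l F₁ x` is antitone
on `(0,1)`; hence `(a - b)(g a - g b) ≤ -l (a - b)²` on `(0, F₁(1))`. The noise `γθ^β w` enters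
both equations additively, so the difference `z = y¹ - y²` is differentiable with
`z' = g(y¹) - g(y²)`, and `(z e^{lt})²` is nonincreasing.
-/

open Set MeasureTheory

lemma intervalIntegrable_mul_one_sub_rpow {β : ℝ} (hβ : β < 1) :
    IntervalIntegrable (fun v : ℝ => (v * (1 - v)) ^ (-β)) volume 0 1 := by
  have hbeta := (Complex.betaIntegral_convergent (u := (1 - β : ℝ)) (v := (1 - β : ℝ))
    (by simpa using hβ) (by simpa using hβ)).norm
  rw [intervalIntegrable_iff_integrableOn_Ioo_of_le zero_le_one] at hbeta ⊢
  refine hbeta.congr_fun (fun v ⟨hv0, hv1⟩ => ?_) measurableSet_Ioo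
  have hv1' : 0 < 1 - v := sub_pos.2 hv1
  dsimp only
  have hsub : (1 : ℂ) - v = ((1 - v : ℝ) : ℂ) := by push_cast; rfl
  rw [norm_mul, hsub,
    Complex.norm_cpow_eq_rpow_re_of_pos hv0, Complex.norm_cpow_eq_rpow_re_of_pos hv1',
    Real.mul_rpow hv0.le hv1'.le]
  norm_num

section F1
variable {β : ℝ}

lemma intervalIntegrable_mul_one_sub_rpow_of_mem (hβ : β < 1) {a b : ℝ} (ha : a ∈ Icc (0:ℝ) 1)
    (hb : b ∈ Icc (0:ℝ) 1) :
    IntervalIntegrable (fun v : ℝ => (v * (1 - v)) ^ (-β)) volume a b :=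
  (intervalIntegrable_mul_one_sub_rpow hβ).mono_set <| by
    rw [uIcc_of_le zero_le_one]; exact uIcc_subset_Icc ha hb

lemma F1_zero : F1 β 0 = 0 := intervalIntegral.integral_same

lemma hasDerivAt_F1 (hβ : β < 1) {x : ℝ} (hx : x ∈ Ioo (0:ℝ) 1) :
    HasDerivAt (F1 β) ((x * (1 - x)) ^ (-β)) x := by
  have hne : x * (1 - x) ≠ 0 := (mul_pos hx.1 (sub_pos.2 hx.2)).ne'
  refine intervalIntegral.integral_hasDerivAt_right
    (intervalIntegrable_mul_one_sub_rpow_of_mem hβ (left_mem_Icc.2 zero_le_one)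
      (Ioo_subset_Icc_self hx))
    (Measurable.stronglyMeasurable (by fun_prop)).stronglyMeasurableAtFilter ?_
  exact (continuousAt_id.mul (continuousAt_const.sub continuousAt_id)).rpow_const (Or.inl hne)

lemma continuousOn_F1 (hβ : β < 1) : ContinuousOn (F1 β) (Icc 0 1) := by
  have := intervalIntegral.continuousOn_primitive_interval'
    (intervalIntegrable_mul_one_sub_rpow hβ) (left_mem_uIcc (a := (0:ℝ)) (b := 1))
  rwa [uIcc_of_le zero_le_one] at this

lemma strictMonoOn_F1 (hβ : β < 1) : StrictMonoOn (F1 β) (Icc 0 1) := by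
  refine strictMonoOn_of_deriv_pos (convex_Icc 0 1) (continuousOn_F1 hβ) fun x hx => ?_
  rw [interior_Icc] at hx
  rw [(hasDerivAt_F1 hβ hx).deriv]
  exact Real.rpow_pos_of_pos (mul_pos hx.1 (sub_pos.2 hx.2)) _

lemma F1_image_Icc (hβ : β < 1) : F1 β '' Icc 0 1 = Icc 0 (F1 β 1) := by
  rw [(continuousOn_F1 hβ).image_Icc_of_monotoneOn zero_le_one (strictMonoOn_F1 hβ).monotoneOn,
    F1_zero]

lemma F1_F1inv (hβ : β < 1) {z : ℝ} (hz : z ∈ Icc 0 (F1 β 1)) : F1 β (F1inv β z) = z := by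
  rw [← F1_image_Icc hβ] at hz
  exact Function.invFunOn_eq hz

lemma F1inv_mem_Icc (hβ : β < 1) {z : ℝ} (hz : z ∈ Icc 0 (F1 β 1)) :
    F1inv β z ∈ Icc (0:ℝ) 1 := by
  rw [← F1_image_Icc hβ] at hz
  exact Function.invFunOn_mem hz

lemma F1inv_F1 (hβ : β < 1) {x : ℝ} (hx : x ∈ Icc (0:ℝ) 1) : F1inv β (F1 β x) = x :=
  (strictMonoOn_F1 hβ).injOn.leftInvOn_invFunOn hx

lemma F1inv_le_F1inv (hβ : β < 1) {a b : ℝ} (ha : a ∈ Icc 0 (F1 β 1))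
    (hb : b ∈ Icc 0 (F1 β 1)) (hab : a ≤ b) : F1inv β a ≤ F1inv β b := by
  rwa [← (strictMonoOn_F1 hβ).le_iff_le (F1inv_mem_Icc hβ ha) (F1inv_mem_Icc hβ hb),
    F1_F1inv hβ ha, F1_F1inv hβ hb]

lemma F1inv_mem_Ioo (hβ : β < 1) {z : ℝ} (hz : z ∈ Ioo 0 (F1 β 1)) :
    F1inv β z ∈ Ioo (0:ℝ) 1 := by
  have hz' := Ioo_subset_Icc_self hz
  obtain ⟨h0, h1⟩ := F1inv_mem_Icc hβ hz'
  refine ⟨h0.lt_of_ne fun h => hz.1.ne ?_, h1.lt_of_ne fun h => hz.2.ne ?_⟩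
  · rw [← F1_F1inv hβ hz', ← h, F1_zero]
  · rw [← F1_F1inv hβ hz', h]

lemma continuousAt_F1inv (hβ : β < 1) {z : ℝ} (hz : z ∈ Ioo 0 (F1 β 1)) :
    ContinuousAt (F1inv β) z := by
  have himage : F1inv β '' Icc 0 (F1 β 1) = Icc 0 1 := by
    refine (mapsTo_iff_image_subset.1 fun _ => F1inv_mem_Icc hβ).antisymm fun x hx => ?_
    exact ⟨F1 β x, F1_image_Icc hβ ▸ mem_image_of_mem _ hx, F1inv_F1 hβ hx⟩
  refine continuousAt_of_monotoneOn_of_image_mem_nhds (fun a ha b hb => F1inv_le_F1inv hβ ha hb)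
    (Icc_mem_nhds hz.1 hz.2) ?_
  rw [himage]
  exact Icc_mem_nhds (F1inv_mem_Ioo hβ hz).1 (F1inv_mem_Ioo hβ hz).2

end F1

def contractionRate (β θ μ : ℝ) : ℝ := 4 * θ * β * μ * (1 - μ)

lemma contractionRate_pos {β θ μ : ℝ} (hβ : 0 < β) (hθ : 0 < θ) (hμ : μ ∈ Ioo (0:ℝ) 1) :
    0 < contractionRate β θ μ :=
  mul_pos (by have := hμ.1; positivity) (sub_pos.2 hμ.2)

lemma contractionRate_mul_le {β θ μ x : ℝ} (hβ : β ∈ Icc (0:ℝ) 1) (hθ : 0 ≤ θ)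
    (hμ : μ ∈ Icc (0:ℝ) 1) (hx : x ∈ Icc (0:ℝ) 1) :
    contractionRate β θ μ * (x * (1 - x)) ≤ θ * (x * (1 - x) + β * (μ - x) * (1 - 2 * x)) := by
  have hgap : θ * (x * (1 - x) + β * (μ - x) * (1 - 2 * x)) - contractionRate β θ μ * (x * (1 - x))
      = θ * (β * (μ * (1 - μ)) * (1 - 2 * x) ^ 2 + (1 - β) * (x * (1 - x)) + β * (x - μ) ^ 2) := by
    unfold contractionRate; ring
  have hgap_nonneg : 0 ≤ θ * (β * (μ * (1 - μ)) * (1 - 2 * x) ^ 2 + (1 - β) * (x * (1 - x))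
      + β * (x - μ) ^ 2) := by
    have := hβ.1
    have := sub_nonneg.2 hβ.2
    have := mul_nonneg hμ.1 (sub_nonneg.2 hμ.2)
    have := mul_nonneg hx.1 (sub_nonneg.2 hx.2)
    positivity
  linarith

section Drift
variable {β θ μ : ℝ}

lemma hasDerivAt_G {x : ℝ} (hx : x ∈ Ioo (0:ℝ) 1) :
    HasDerivAt (G β θ μ)
      (-θ * (x * (1 - x) + β * (μ - x) * (1 - 2 * x)) * (x * (1 - x)) ^ (-β - 1)) x := by
  have hp : 0 < x * (1 - x) := mul_pos hx.1 (sub_pos.2 hx.2)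
  have hpoly : HasDerivAt (fun x : ℝ => x * (1 - x)) (1 - 2 * x) x :=
    ((hasDerivAt_id' x).mul ((hasDerivAt_id' x).const_sub 1)).congr_deriv (by ring)
  have hlin : HasDerivAt (fun x : ℝ => θ * (μ - x)) (-θ) x :=
    (((hasDerivAt_id' x).const_sub μ).const_mul θ).congr_deriv (by ring)
  refine (hlin.mul (hpoly.rpow_const (p := -β) (Or.inl hp.ne'))).congr_deriv ?_
  rw [show -β = 1 + (-β - 1) by ring, Real.rpow_add hp, Real.rpow_one,
    show 1 + (-β - 1) - 1 = -β - 1 by ring]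
  ring

lemma antitoneOn_G_add_F1 (hβ : β ∈ Ico (0:ℝ) 1) (hθ : 0 ≤ θ) (hμ : μ ∈ Icc (0:ℝ) 1) :
    AntitoneOn (fun x => G β θ μ x + contractionRate β θ μ * F1 β x) (Ioo 0 1) := by
  have hderiv : ∀ x ∈ Ioo (0:ℝ) 1,
      HasDerivAt (fun x => G β θ μ x + contractionRate β θ μ * F1 β x)
      ((contractionRate β θ μ * (x * (1 - x)) - θ * (x * (1 - x) + β * (μ - x) * (1 - 2 * x)))
        * (x * (1 - x)) ^ (-β - 1)) x := by
    intro x hx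
    have hp : 0 < x * (1 - x) := mul_pos hx.1 (sub_pos.2 hx.2)
    refine ((hasDerivAt_G hx).add
      ((hasDerivAt_F1 hβ.2 hx).const_mul (contractionRate β θ μ))).congr_deriv ?_
    rw [show -β = 1 + (-β - 1) by ring, Real.rpow_add hp, Real.rpow_one,
      show 1 + (-β - 1) = -β by ring]
    ring
  refine antitoneOn_of_deriv_nonpos (convex_Ioo 0 1)
    (fun x hx => (hderiv x hx).continuousAt.continuousWithinAt) (fun x hx => ?_) (fun x hx => ?_)
  all_goals rw [interior_Ioo] at hx
  · exact (hderiv x hx).differentiableAt.differentiableWithinAt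
  · rw [(hderiv x hx).deriv]
    refine mul_nonpos_of_nonpos_of_nonneg (sub_nonpos.2 ?_)
      (Real.rpow_nonneg (mul_pos hx.1 (sub_pos.2 hx.2)).le _)
    exact contractionRate_mul_le (Ico_subset_Icc_self hβ) hθ hμ (Ioo_subset_Icc_self hx)

lemma sub_mul_G_F1inv_sub_le (hβ : β ∈ Ico (0:ℝ) 1) (hθ : 0 ≤ θ) (hμ : μ ∈ Icc (0:ℝ) 1)
    {a b : ℝ} (ha : a ∈ Ioo 0 (F1 β 1)) (hb : b ∈ Ioo 0 (F1 β 1)) :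
    (a - b) * (G β θ μ (F1inv β a) - G β θ μ (F1inv β b)) ≤
      -contractionRate β θ μ * (a - b) ^ 2 := by
  wlog hba : b ≤ a generalizing a b
  · calc _ = (b - a) * (G β θ μ (F1inv β b) - G β θ μ (F1inv β a)) := by ring
      _ ≤ -contractionRate β θ μ * (b - a) ^ 2 := this hb ha (le_of_not_ge hba)
      _ = _ := by ring
  have hanti := antitoneOn_G_add_F1 hβ hθ hμ (F1inv_mem_Ioo hβ.2 hb) (F1inv_mem_Ioo hβ.2 ha)
    (F1inv_le_F1inv hβ.2 (Ioo_subset_Icc_self hb) (Ioo_subset_Icc_self ha) hba)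
  simp only [F1_F1inv hβ.2 (Ioo_subset_Icc_self ha), F1_F1inv hβ.2 (Ioo_subset_Icc_self hb)]
    at hanti
  have hsub : G β θ μ (F1inv β a) - G β θ μ (F1inv β b) ≤ -contractionRate β θ μ * (a - b) := by
    linarith
  calc _ ≤ (a - b) * (-contractionRate β θ μ * (a - b)) :=
        mul_le_mul_of_nonneg_left hsub (sub_nonneg.2 hba)
    _ = _ := by ring

lemma continuousOn_G_F1inv (hβ : β < 1) :
    ContinuousOn (fun z => G β θ μ (F1inv β z)) (Ioo 0 (F1 β 1)) := fun _ hz =>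
  ((hasDerivAt_G (F1inv_mem_Ioo hβ hz)).continuousAt.comp
    (continuousAt_F1inv hβ hz)).continuousWithinAt

end Drift

theorem abs_le_abs_mul_exp_of_mul_deriv_le {φ φ' : ℝ → ℝ} {l : ℝ} (hc : ContinuousOn φ (Ici 0))
    (hd : ∀ t > 0, HasDerivAt φ (φ' t) t) (hdiss : ∀ t > 0, φ t * φ' t ≤ -l * φ t ^ 2)
    {t : ℝ} (ht : 0 ≤ t) : |φ t| ≤ |φ 0| * Real.exp (-l * t) := by
  set ψ : ℝ → ℝ := fun u => (φ u * Real.exp (l * u)) ^ 2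
  have hψ' : ∀ u > 0, HasDerivAt ψ
      (2 * Real.exp (l * u) ^ 2 * (φ u * φ' u + l * φ u ^ 2)) u := by
    intro u hu
    have hexp : HasDerivAt (fun u => Real.exp (l * u)) (Real.exp (l * u) * l) u := by
      simpa using ((hasDerivAt_id u).const_mul l).exp
    refine (((hd u hu).mul hexp).pow 2).congr_deriv ?_
    simp only [Pi.mul_apply, Nat.cast_ofNat]; ring
  have hanti : AntitoneOn ψ (Ici 0) := by
    refine antitoneOn_of_deriv_nonpos (convex_Ici 0)
      ((hc.mul (by fun_prop)).pow 2) (fun u hu => ?_) (fun u hu => ?_)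
    all_goals rw [interior_Ici] at hu
    · exact (hψ' u hu).differentiableAt.differentiableWithinAt
    · rw [(hψ' u hu).deriv]
      nlinarith [hdiss u hu, sq_nonneg (Real.exp (l * u))]
  have hψt : (φ t * Real.exp (l * t)) ^ 2 ≤ φ 0 ^ 2 := by
    simpa [ψ] using hanti self_mem_Ici ht ht
  rw [neg_mul, Real.exp_neg, ← div_eq_mul_inv, le_div_iff₀ (Real.exp_pos _),
    ← abs_of_pos (Real.exp_pos (l * t)), ← abs_mul]
  exact sq_le_sq.1 hψt

theorem hasDerivAt_integral_of_continuousOn_Ici {E : Type*} [NormedAddCommGroup E]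
    [NormedSpace ℝ E] [CompleteSpace E] {f : ℝ → E} {a τ : ℝ} (hf : ContinuousOn f (Ici a))
    (hτ : a < τ) : HasDerivAt (fun u => ∫ s in a..u, f s) (f τ) τ :=
  intervalIntegral.integral_hasDerivAt_right
    ((hf.mono (by rw [uIcc_of_le hτ.le]; exact Icc_subset_Ici_self)).intervalIntegrable)
    ⟨Ioi a, Ioi_mem_nhds hτ, (hf.mono Ioi_subset_Ici_self).aestronglyMeasurable measurableSet_Ioi⟩
    (hf.continuousAt (Ici_mem_nhds hτ))

theorem hasDerivAt_sub_of_eq_add_integral_add {y₁ y₂ f₁ f₂ n : ℝ → ℝ} {c₁ c₂ τ : ℝ}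
    (hf₁ : ContinuousOn f₁ (Ici 0)) (hf₂ : ContinuousOn f₂ (Ici 0))
    (hy₁ : ∀ t ∈ Ici (0:ℝ), y₁ t = c₁ + (∫ s in (0:ℝ)..t, f₁ s) + n t)
    (hy₂ : ∀ t ∈ Ici (0:ℝ), y₂ t = c₂ + (∫ s in (0:ℝ)..t, f₂ s) + n t) (hτ : 0 < τ) :
    HasDerivAt (fun t => y₁ t - y₂ t) (f₁ τ - f₂ τ) τ := by
  refine (((hasDerivAt_integral_of_continuousOn_Ici hf₁ hτ).sub
    (hasDerivAt_integral_of_continuousOn_Ici hf₂ hτ)).const_add (c₁ - c₂)).congr_of_eventuallyEq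
    ?_
  filter_upwards [Ici_mem_nhds hτ] with t ht
  simp only [Pi.sub_apply, hy₁ t ht, hy₂ t ht]
  ring

theorem stmt14 (α β θ μ γ : ℝ) (hα : α ∈ Set.Ioc (0:ℝ) 1)
    (hβ : β ∈ Set.Ioo (1 - α) 1) (hθ : 0 < θ) (hμ : μ ∈ Set.Ioo (0:ℝ) 1) :
    ∃ l : ℝ, 0 < l ∧
      ∀ w : ℝ → ℝ, w 0 = 0 →
        (∀ T > (0:ℝ), ∃ C : ℝ, ∀ s ∈ Set.Icc (0:ℝ) T, ∀ t ∈ Set.Icc (0:ℝ) T,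
          |w t - w s| ≤ C * |t - s| ^ α) →
        ∀ y₀1 ∈ Set.Ioo 0 (F1 β 1), ∀ y₀2 ∈ Set.Ioo 0 (F1 β 1),
        ∀ y1 y2 : ℝ → ℝ,
          (ContinuousOn y1 (Set.Ici 0) ∧
           (∀ t ∈ Set.Ici (0:ℝ), y1 t ∈ Set.Ioo 0 (F1 β 1)) ∧
           (∀ t ∈ Set.Ici (0:ℝ),
             y1 t = y₀1 + (∫ s in (0:ℝ)..t, G β θ μ (F1inv β (y1 s))) + γ * θ ^ β * w t)) →
          (ContinuousOn y2 (Set.Ici 0) ∧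
           (∀ t ∈ Set.Ici (0:ℝ), y2 t ∈ Set.Ioo 0 (F1 β 1)) ∧
           (∀ t ∈ Set.Ici (0:ℝ),
             y2 t = y₀2 + (∫ s in (0:ℝ)..t, G β θ μ (F1inv β (y2 s))) + γ * θ ^ β * w t)) →
          ∀ t ∈ Set.Ici (0:ℝ), |y1 t - y2 t| ≤ |y₀1 - y₀2| * Real.exp (-l * t) := by
  have hβ' : β ∈ Ioo (0:ℝ) 1 := ⟨by linarith [hα.2, hβ.1], hβ.2⟩
  refine ⟨contractionRate β θ μ, contractionRate_pos hβ'.1 hθ hμ, ?_⟩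
  rintro w hw0 - y₀1 - y₀2 - y1 y2 ⟨hc1, hm1, he1⟩ ⟨hc2, hm2, he2⟩ t ht
  have hinit : y1 0 - y2 0 = y₀1 - y₀2 := by
    rw [he1 0 self_mem_Ici, he2 0 self_mem_Ici, hw0, intervalIntegral.integral_same,
      intervalIntegral.integral_same]
    ring
  rw [← hinit]
  refine abs_le_abs_mul_exp_of_mul_deriv_le (hc1.sub hc2)
    (fun τ hτ => hasDerivAt_sub_of_eq_add_integral_add
      ((continuousOn_G_F1inv hβ.2).comp hc1 hm1) ((continuousOn_G_F1inv hβ.2).comp hc2 hm2)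
      he1 he2 hτ)
    (fun τ hτ => sub_mul_G_F1inv_sub_le (Ioo_subset_Ico_self hβ') hθ.le (Ioo_subset_Icc_self hμ)
      (hm1 τ hτ.le) (hm2 τ hτ.le)) ht
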